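/- arXiv:1201.4357 — 3 statements merged into one kernel-verified Lean document; each statement's English description precedes it below -/
import Mathlib

section
/- Let M be a Riemann-Roch monomial ideal (artinian, level of genus g, reflection-invariant with canonical monomial x^K). If the monomial x^K divides x^b (with b ∈ N^m), then rank(x^b) = degree(x^b) − g. -/
open Finset

/-- A set of exponent vectors is a monomial ideal iff it is upward closed. -/
def UpClosed {m : ℕ} (M : Set (Fin m → ℕ)) : Prop :=
  ∀ u ∈ M, ∀ v : Fin m → ℕ, (∀ i, u i ≤ v i) → v ∈ M

/-- Artinian: a power of each variable lies in `M`. -/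
def ArtinianMono {m : ℕ} (M : Set (Fin m → ℕ)) : Prop :=
  ∀ i : Fin m, ∃ k : ℕ, (fun j => if j = i then k else 0) ∈ M

/-- Socle monomials: `x^c ∉ M` with `x_i·x^c ∈ M` for all `i`. -/
def MonSoc {m : ℕ} (M : Set (Fin m → ℕ)) : Set (Fin m → ℕ) :=
  {c | c ∉ M ∧ ∀ i : Fin m, (fun j => c j + if j = i then 1 else 0) ∈ M}

/-- `degree⁺(u)`: the sum of the positive coordinates of `u`. -/
def degP {m : ℕ} (w : Fin m → ℤ) : ℤ := ∑ i, max (w i) 0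

/-- total degree -/
def degZ {m : ℕ} (w : Fin m → ℤ) : ℤ := ∑ i, w i

def zvec {m : ℕ} (b : Fin m → ℕ) : Fin m → ℤ := fun i => (b i : ℤ)

/-- rank of a Laurent monomial `x^b` with respect to `M`. -/
noncomputable def rnk {m : ℕ} (M : Set (Fin m → ℕ)) (b : Fin m → ℤ) : ℤ :=
  sInf ((fun c => degP (b - zvec c)) '' MonSoc M) - 1

/-- `M` is level of genus `g`: all socle monomials have degree `g - 1`. -/
def LevelOf {m : ℕ} (M : Set (Fin m → ℕ)) (g : ℤ) : Prop :=
  ∀ c ∈ MonSoc M, degZ (zvec c) = g - 1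

/-- Reflection invariance with canonical monomial `x^K`. -/
def ReflInv {m : ℕ} (M : Set (Fin m → ℕ)) (K : Fin m → ℕ) : Prop :=
  ∀ c ∈ MonSoc M, (∀ i, c i ≤ K i) ∧ (fun i => K i - c i) ∈ MonSoc M

/-! If `x^K ∣ x^b`, every socle monomial `x^c` divides `x^b`, so `b - c` has no negative
coordinates and `degree⁺(b - c) = deg b - deg c = deg b - (g - 1)` is the same for all of
them. The minimum defining the rank is therefore taken over a constant function; it only
remains to see that the socle is nonempty, which holds for any proper artinian monomial
ideal: a monomial of maximal degree outside `M` is a socle monomial. -/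

theorem monSoc_nonempty {m : ℕ} {M : Set (Fin m → ℕ)} (hup : UpClosed M)
    (hart : ArtinianMono M) (hproper : (0 : Fin m → ℕ) ∉ M) :
    (MonSoc M).Nonempty := by
  classical
  choose k hk using hart
  -- every monomial outside `M` lies in this box, since `x_i^(k i) ∈ M`
  let S : Finset (Fin m → ℕ) :=
    (Fintype.piFinset fun i => range (k i)).filter (· ∉ M)
  have mem_S {u : Fin m → ℕ} (hu : u ∉ M) : u ∈ S := by
    refine mem_filter.mpr ⟨Fintype.mem_piFinset.mpr fun i => mem_range.mpr ?_, hu⟩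
    by_contra! hki
    refine hu (hup _ (hk i) u fun j => ?_)
    split_ifs with hji
    · exact hji ▸ hki
    · exact Nat.zero_le _
  obtain ⟨c, hcS, hmax⟩ := S.exists_max_image (fun u => ∑ i, u i) ⟨0, mem_S hproper⟩
  refine ⟨c, (mem_filter.mp hcS).2, fun i => ?_⟩
  by_contra hnot
  have hsum : ∑ j, (c j + if j = i then 1 else 0) = ∑ j, c j + 1 := by
    simp [sum_add_distrib]
  have := hmax _ (mem_S hnot)
  omega

theorem degZ_sub {m : ℕ} (v w : Fin m → ℤ) : degZ (v - w) = degZ v - degZ w :=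
  sum_sub_distrib _ _

theorem degP_eq_degZ_of_nonneg {m : ℕ} {w : Fin m → ℤ} (hw : 0 ≤ w) : degP w = degZ w :=
  sum_congr rfl fun i _ => max_eq_left (hw i)

theorem degP_zvec_sub_of_le {m : ℕ} {b c : Fin m → ℕ} (hcb : c ≤ b) :
    degP (zvec b - zvec c) = degZ (zvec b) - degZ (zvec c) := by
  have hnonneg : 0 ≤ zvec b - zvec c := fun i => sub_nonneg.mpr (Int.ofNat_le.mpr (hcb i))
  rw [degP_eq_degZ_of_nonneg hnonneg, degZ_sub]

theorem rnk_eq_of_degP_const {m : ℕ} {M : Set (Fin m → ℕ)} {b : Fin m → ℤ} {d : ℤ}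
    (hne : (MonSoc M).Nonempty) (hd : ∀ c ∈ MonSoc M, degP (b - zvec c) = d) :
    rnk M b = d - 1 := by
  rw [rnk, (hne.image _).subset_singleton_iff.mp (Set.image_subset_iff.mpr hd),
    csInf_singleton]

/-- if `x^K` divides `x^b` then `rank(x^b) = deg(x^b) - g`. -/
theorem stmt3 {m : ℕ} (M : Set (Fin m → ℕ)) (g : ℤ) (K : Fin m → ℕ)
    (hup : UpClosed M) (hart : ArtinianMono M) (hproper : (0 : Fin m → ℕ) ∉ M)
    (hlev : LevelOf M g) (hrefl : ReflInv M K)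
    (b : Fin m → ℕ) (hdvd : ∀ i, K i ≤ b i) :
    rnk M (zvec b) = degZ (zvec b) - g := by
  have hdeg : ∀ c ∈ MonSoc M, degP (zvec b - zvec c) = degZ (zvec b) - g + 1 := by
    intro c hc
    have hcb : c ≤ b := fun i => ((hrefl c hc).1 i).trans (hdvd i)
    rw [degP_zvec_sub_of_le hcb, hlev c hc]
    ring
  rw [rnk_eq_of_degP_const (monSoc_nonempty hup hart hproper) hdeg]
  ring
end

section
/- Let M be an artinian monomial ideal in K[x_1,...,x_m] and let x^a, x^b be monomials with rank(x^a) ≥ 0 and rank(x^b) ≥ 0 (equivalently x^a, x^b ∈ M). Then rank(x^a · x^b) ≥ rank(x^a) + rank(x^b). -/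
open Finset

/-!
Write `D_M(w) = rank(x^w) + 1 = min_{c ∈ MonSoc M} degree⁺(w − c)`. Given a socle monomial `x^c`,
split the positive part `u` of `a + b − c` as `u₁ + u₂` with `u₁ ≤ a`, `u₂ ≤ b`, `a − u₁ ≤ c` and
`b − u₂ ≤ c`. Then `x^(a − u₁) ∉ M`, so it divides some socle monomial `x^{c'}` (the complement of an
artinian monomial ideal is finite, so it has enough maximal elements), whence `D_M(a) ≤ |u₁|`;
likewise `D_M(b) ≤ |u₂|`. Hence `D_M(a) + D_M(b) ≤ D_M(a + b)`, i.e.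
`rank(x^a) + rank(x^b) + 1 ≤ rank(x^(a+b))`.
-/

lemma degP_nonneg {m : ℕ} (w : Fin m → ℤ) : 0 ≤ degP w :=
  sum_nonneg fun _ _ => le_max_right _ _

section Socle

variable {m : ℕ} {M : Set (Fin m → ℕ)}

lemma UpClosed.finite_compl (hup : UpClosed M) (hart : ArtinianMono M) : Mᶜ.Finite := by
  choose k hk using hart
  refine (Set.finite_Iic k).subset fun w hw i => ?_
  by_contra! hi
  exact hw (hup _ (hk i) w fun j => by
    split_ifs with hj
    · exact hj ▸ hi.le
    · exact Nat.zero_le _)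

lemma UpClosed.exists_mem_monSoc_le (hup : UpClosed M) (hart : ArtinianMono M)
    {v : Fin m → ℕ} (hv : v ∉ M) : ∃ c ∈ MonSoc M, v ≤ c := by
  obtain ⟨c, hvc, hc_notMem, hc_max⟩ := (hup.finite_compl hart).exists_le_maximal hv
  refine ⟨c, ⟨hc_notMem, fun i => ?_⟩, hvc⟩
  by_contra h
  have := hc_max h fun j => Nat.le_add_right _ _
  simpa using this i

lemma UpClosed.sInf_degP_le (hup : UpClosed M) (hart : ArtinianMono M)
    {w u : Fin m → ℕ} (hu : u ≤ w) (hwu : w - u ∉ M) :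
    sInf ((fun c => degP (zvec w - zvec c)) '' MonSoc M) ≤ ∑ i, (u i : ℤ) := by
  obtain ⟨c, hc, hwuc⟩ := hup.exists_mem_monSoc_le hart hwu
  have hbdd : BddBelow ((fun c => degP (zvec w - zvec c)) '' MonSoc M) :=
    ⟨0, Set.forall_mem_image.mpr fun _ _ => degP_nonneg _⟩
  calc sInf ((fun c => degP (zvec w - zvec c)) '' MonSoc M)
      ≤ degP (zvec w - zvec c) := csInf_le hbdd ⟨c, hc, rfl⟩
    _ ≤ ∑ i, (u i : ℤ) := sum_le_sum fun i _ => by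
        have h₁ := hu i
        have h₂ := hwuc i
        simp only [Pi.sub_apply, zvec] at h₂ ⊢
        omega

lemma UpClosed.sInf_degP_add_le (hup : UpClosed M) (hart : ArtinianMono M) (a b : Fin m → ℕ) :
    sInf ((fun c => degP (zvec a - zvec c)) '' MonSoc M)
      + sInf ((fun c => degP (zvec b - zvec c)) '' MonSoc M)
      ≤ sInf ((fun c => degP (zvec (a + b) - zvec c)) '' MonSoc M) := by
  rcases ((fun c => degP (zvec (a + b) - zvec c)) '' MonSoc M).eq_empty_or_nonempty
    with hempty | hne
  · -- all three infima are `sInf ∅ = 0`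
    have hsoc : MonSoc M = ∅ := Set.image_eq_empty.mp hempty
    simp [hsoc]
  refine le_csInf hne ?_
  rintro _ ⟨c, hc, rfl⟩
  let u₁ : Fin m → ℕ := a - c
  let u₂ : Fin m → ℕ := (a + b - c) - u₁
  have hu₁ : u₁ ≤ a := fun i => Nat.sub_le _ _
  have hu₂ : u₂ ≤ b := fun i => by simp only [u₂, u₁, Pi.sub_apply, Pi.add_apply]; omega
  have hau₁ : a - u₁ ≤ c := fun i => by simp only [u₁, Pi.sub_apply]; omega
  have hbu₂ : b - u₂ ≤ c := fun i => by simp only [u₂, u₁, Pi.sub_apply, Pi.add_apply]; omega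
  have h₁ := hup.sInf_degP_le hart hu₁ fun h => hc.1 (hup _ h c hau₁)
  have h₂ := hup.sInf_degP_le hart hu₂ fun h => hc.1 (hup _ h c hbu₂)
  have hsplit : ∑ i, (u₁ i : ℤ) + ∑ i, (u₂ i : ℤ) = degP (zvec (a + b) - zvec c) := by
    rw [← sum_add_distrib]
    refine sum_congr rfl fun i _ => ?_
    simp only [u₂, u₁, zvec, Pi.sub_apply, Pi.add_apply]
    omega
  linarith

end Socle

theorem stmt5_general {m : ℕ} (M : Set (Fin m → ℕ))
    (hup : UpClosed M) (hart : ArtinianMono M)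
    (a b : Fin m → ℕ) :
    rnk M (zvec a) + rnk M (zvec b) ≤ rnk M (zvec (a + b)) := by
  have := hup.sInf_degP_add_le hart a b
  unfold rnk
  linarith

/-- superadditivity of rank for monomials of non-negative rank. -/
theorem stmt5 {m : ℕ} (M : Set (Fin m → ℕ))
    (hup : UpClosed M) (hart : ArtinianMono M) (hproper : (0 : Fin m → ℕ) ∉ M)
    (a b : Fin m → ℕ) (ha : 0 ≤ rnk M (zvec a)) (hb : 0 ≤ rnk M (zvec b)) :
    rnk M (zvec a) + rnk M (zvec b) ≤ rnk M (zvec (a + b)) :=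
  stmt5_general M hup hart a b
end

section
/- Let M be a Riemann-Roch monomial ideal of genus g with canonical monomial x^K. If x^b is a monomial dividing x^K such that rank(x^b) ≥ 0 and rank(x^K/x^b) ≥ 0, then rank(x^b) ≤ (degree(x^b) − 1)/2. -/
/-!
Let `c` be a socle monomial at which the minimum defining `rnk M b + 1` is attained. By
reflection invariance `x^K / x^c` is a socle monomial too, so `rnk M b + 1` is also bounded by
`degP (b - (K - c))`. Coordinatewise, for `0 ≤ b, c ≤ K`, the positive parts of `b - c` and
`b - (K - c)` add up to at most `b`; hence `2 (rnk M b + 1) ≤ deg b`, which is Clifford's bound.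
An empty socle gives the junk value `rnk M b = sInf ∅ - 1 = -1`, for which the bound is trivial.
-/

open Finset

lemma degZ_zvec_nonneg {m : ℕ} (b : Fin m → ℕ) : 0 ≤ degZ (zvec b) :=
  Finset.sum_nonneg fun i _ => Int.natCast_nonneg (b i)

lemma zvec_tsub {m : ℕ} {K c : Fin m → ℕ} (hc : ∀ i, c i ≤ K i) :
    zvec (fun i => K i - c i) = zvec K - zvec c := by
  funext i
  simp [zvec, Nat.cast_sub (hc i)]

lemma degP_sub_sub_add_degP_sub_le_degZ {m : ℕ} {b c K : Fin m → ℤ}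
    (hb0 : ∀ i, 0 ≤ b i) (hbK : ∀ i, b i ≤ K i) (hc0 : ∀ i, 0 ≤ c i) (hcK : ∀ i, c i ≤ K i) :
    degP (b - (K - c)) + degP (b - c) ≤ degZ b := by
  rw [degP, degP, degZ, ← Finset.sum_add_distrib]
  refine Finset.sum_le_sum fun i _ => ?_
  simp only [Pi.sub_apply]
  have := hb0 i; have := hbK i; have := hc0 i; have := hcK i
  omega

section Rank

variable {m : ℕ} (M : Set (Fin m → ℕ)) (b : Fin m → ℤ)

lemma bddBelow_degP_image_monSoc :
    BddBelow ((fun c => degP (b - zvec c)) '' MonSoc M) :=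
  ⟨0, by rintro _ ⟨c, -, rfl⟩; exact degP_nonneg _⟩

lemma rnk_add_one_le_degP {c : Fin m → ℕ} (hc : c ∈ MonSoc M) :
    rnk M b + 1 ≤ degP (b - zvec c) := by
  rw [rnk, sub_add_cancel]
  exact csInf_le (bddBelow_degP_image_monSoc M b) ⟨c, hc, rfl⟩

lemma exists_rnk_add_one_eq_degP (h : (MonSoc M).Nonempty) :
    ∃ c ∈ MonSoc M, rnk M b + 1 = degP (b - zvec c) := by
  obtain ⟨c, hc, hval⟩ :=
    Int.csInf_mem (h.image _) (bddBelow_degP_image_monSoc M b)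
  exact ⟨c, hc, by rw [rnk, sub_add_cancel]; exact hval.symm⟩

lemma rnk_eq_neg_one_of_monSoc_eq_empty (h : MonSoc M = ∅) : rnk M b = -1 := by
  rw [rnk, h, Set.image_empty, Int.csInf_empty, zero_sub]

end Rank

lemma two_mul_rnk_add_one_le_degZ {m : ℕ} {M : Set (Fin m → ℕ)} {K b : Fin m → ℕ}
    (hrefl : ReflInv M K) (hdvd : ∀ i, b i ≤ K i) :
    2 * (rnk M (zvec b) + 1) ≤ degZ (zvec b) := by
  rcases (MonSoc M).eq_empty_or_nonempty with hempty | hne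
  · rw [rnk_eq_neg_one_of_monSoc_eq_empty M _ hempty]
    simpa using degZ_zvec_nonneg b
  obtain ⟨c, hc, hmin⟩ := exists_rnk_add_one_eq_degP M (zvec b) hne
  obtain ⟨hcK, hdual⟩ := hrefl c hc
  have hdual_le := rnk_add_one_le_degP M (zvec b) hdual
  rw [zvec_tsub hcK] at hdual_le
  have hsum := degP_sub_sub_add_degP_sub_le_degZ (b := zvec b) (c := zvec c) (K := zvec K)
    (fun i => Int.natCast_nonneg (b i)) (fun i => Int.ofNat_le.mpr (hdvd i))
    (fun i => Int.natCast_nonneg (c i)) (fun i => Int.ofNat_le.mpr (hcK i))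
  omega

theorem stmt6_general {m : ℕ} (M : Set (Fin m → ℕ)) (K : Fin m → ℕ)
    (hrefl : ReflInv M K)
    (b : Fin m → ℕ) (hdvd : ∀ i, b i ≤ K i) :
    rnk M (zvec b) ≤ (degZ (zvec b) - 1) / 2 := by
  have := two_mul_rnk_add_one_le_degZ hrefl hdvd
  omega

/-- Clifford's theorem for Riemann-Roch monomial ideals. -/
theorem stmt6 {m : ℕ} (M : Set (Fin m → ℕ)) (g : ℤ) (K : Fin m → ℕ)
    (hup : UpClosed M) (hart : ArtinianMono M) (hproper : (0 : Fin m → ℕ) ∉ M)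
    (hlev : LevelOf M g) (hrefl : ReflInv M K)
    (b : Fin m → ℕ) (hdvd : ∀ i, b i ≤ K i)
    (hb : 0 ≤ rnk M (zvec b)) (hKb : 0 ≤ rnk M (zvec K - zvec b)) :
    rnk M (zvec b) ≤ (degZ (zvec b) - 1) / 2 :=
  stmt6_general M K hrefl b hdvd
end
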